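/- Let n ≥ 3 and let d be an asymmetric weighted graph on n vertices with ∑_{k} d j k = 0 for every vertex j. Then d is the linear combination d = ∑_{0 < j < k < n} (d j k) • c(0, j, k) of the three-cycle graphs anchored at vertex 0, where the coefficient of c(0,j,k) is the arc value d j k. -/
import Mathlib


/-- An asymmetric weighted graph on `n` vertices. -/
def IsAsymGraph {n : ℕ} (d : Fin n → Fin n → ℝ) : Prop :=
  ∀ i j, d i j = -(d j i)

/-- Strong transitivity. -/
def StronglyTransitive {n : ℕ} (d : Fin n → Fin n → ℝ) : Prop :=
  ∀ i j k, d i j + d j k = d i k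

/-- The `d`-length of a walk `v` of length `m`. -/
def walkLen {n m : ℕ} (d : Fin n → Fin n → ℝ) (v : Fin (m + 1) → Fin n) : ℝ :=
  ∑ t : Fin m, d (v t.castSucc) (v t.succ)

/-- The inner product of two weighted graphs. -/
def ginner {n : ℕ} (d e : Fin n → Fin n → ℝ) : ℝ :=
  ∑ i : Fin n, ∑ j : Fin n, d i j * e i j

/-- `d` is orthogonal to every strongly transitive asymmetric graph. -/
def OrthST {n : ℕ} (d : Fin n → Fin n → ℝ) : Prop :=
  ∀ e : Fin n → Fin n → ℝ, IsAsymGraph e → StronglyTransitive e → ginner d e = 0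

/-- The three-cycle graph on the pairwise distinct vertices `p q r`. -/
def threeCycle {n : ℕ} (p q r : Fin n) : Fin n → Fin n → ℝ :=
  fun a b =>
    if (a, b) = (p, q) ∨ (a, b) = (q, r) ∨ (a, b) = (r, p) then 1
    else if (a, b) = (q, p) ∨ (a, b) = (r, q) ∨ (a, b) = (p, r) then -1
    else 0

/-- The `d`-length of a Hamiltonian circuit given by a bijection `v`. -/
def hamLen {n : ℕ} (d : Fin n → Fin n → ℝ) (v : Fin n → Fin n) : ℝ :=
  ∑ t : Fin n, d (v t) (v (finRotate n t))

set_option maxHeartbeats 1000000 in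
theorem tc_eval {n : ℕ} (hn : 3 ≤ n) (j k a b : Fin n)
    (hj : (j:ℕ) ≠ 0) (hk : (k:ℕ) ≠ 0) (hjk : (j:ℕ) ≠ (k:ℕ)) :
    threeCycle (⟨0, by omega⟩ : Fin n) j k a b =
      if a = j ∧ b = k then 1
      else if a = k ∧ b = j then -1
      else if (a:ℕ) = 0 ∧ b = j then 1
      else if a = j ∧ (b:ℕ) = 0 then -1
      else if a = k ∧ (b:ℕ) = 0 then 1
      else if (a:ℕ) = 0 ∧ b = k then -1
      else 0 := by
  simp only [threeCycle, Prod.mk.injEq]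
  split_ifs <;> (try norm_num) <;> simp_all [Fin.ext_iff] <;> omega

set_option maxHeartbeats 2000000 in
theorem keyA {n : ℕ} (hn : 3 ≤ n) (d : Fin n → Fin n → ℝ) (hd : IsAsymGraph d)
    (a b j k : Fin n) (ha : (a:ℕ) = 0) (hb : (b:ℕ) = 0) :
    (if 0 < (j:ℕ) ∧ j < k then d j k * threeCycle (⟨0, by omega⟩ : Fin n) j k a b else 0)
      = 0 := by
  by_cases h : 0 < (j:ℕ) ∧ j < k
  · rw [if_pos h]
    have h2 : (j:ℕ) < (k:ℕ) := by have := h.2; rwa [Fin.lt_def] at this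
    rw [tc_eval hn j k a b (by omega) (by omega) (by omega)]
    split_ifs <;>
      first
        | (exfalso; tauto)
        | (simp_all <;> first | linarith | omega)
        | (simp_all [Fin.ext_iff] <;> first | linarith | omega)
        | (exfalso; simp_all [Fin.ext_iff] <;> first | linarith | omega)
  · rw [if_neg h]

set_option maxHeartbeats 2000000 in
theorem keyB {n : ℕ} (hn : 3 ≤ n) (d : Fin n → Fin n → ℝ) (hd : IsAsymGraph d)
    (a b j k : Fin n) (ha : (a:ℕ) = 0) (hb : ¬(b:ℕ) = 0) :
    (if 0 < (j:ℕ) ∧ j < k then d j k * threeCycle (⟨0, by omega⟩ : Fin n) j k a b else 0)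
    = (if b = j then (if 0 < (b:ℕ) ∧ (b:ℕ) < (k:ℕ) then d b k else 0) else 0)
    + (if b = k then (if 0 < (j:ℕ) ∧ (j:ℕ) < (b:ℕ) then d b j else 0) else 0) := by
  have H1 : d j k + d k j = 0 := by rw [hd j k]; ring
  have H2 : d b j + d j b = 0 := by rw [hd b j]; ring
  have H3 : d b k + d k b = 0 := by rw [hd b k]; ring
  by_cases h : 0 < (j:ℕ) ∧ j < k
  · rw [if_pos h]
    have h2 : (j:ℕ) < (k:ℕ) := by have := h.2; rwa [Fin.lt_def] at this
    rw [tc_eval hn j k a b (by omega) (by omega) (by omega)]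
    split_ifs <;>
      first
        | (exfalso; tauto)
        | (simp_all <;> first | linarith | omega)
        | (simp_all [Fin.ext_iff] <;> first | linarith | omega)
        | (exfalso; simp_all [Fin.ext_iff] <;> first | linarith | omega)
  · rw [if_neg h]
    have h2 : ¬((j:ℕ) < (k:ℕ)) ∨ (j:ℕ) = 0 := by
      rw [Fin.lt_def] at h; omega
    have e1 : (if b = j then (if 0 < (b:ℕ) ∧ (b:ℕ) < (k:ℕ) then d b k else 0) else 0) = 0 := by
      by_cases hbj : b = j
      · have hv : (b:ℕ) = (j:ℕ) := by rw [hbj]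
        rw [if_pos hbj, if_neg (by omega)]
      · rw [if_neg hbj]
    have e2 : (if b = k then (if 0 < (j:ℕ) ∧ (j:ℕ) < (b:ℕ) then d b j else 0) else 0) = 0 := by
      by_cases hbk : b = k
      · have hv : (b:ℕ) = (k:ℕ) := by rw [hbk]
        rw [if_pos hbk, if_neg (by omega)]
      · rw [if_neg hbk]
    rw [e1, e2]; ring

set_option maxHeartbeats 2000000 in
theorem keyC {n : ℕ} (hn : 3 ≤ n) (d : Fin n → Fin n → ℝ) (hd : IsAsymGraph d)
    (a b j k : Fin n) (ha : ¬(a:ℕ) = 0) (hb : (b:ℕ) = 0) :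
    (if 0 < (j:ℕ) ∧ j < k then d j k * threeCycle (⟨0, by omega⟩ : Fin n) j k a b else 0)
    = (if a = k then (if 0 < (j:ℕ) ∧ (j:ℕ) < (a:ℕ) then -(d a j) else 0) else 0)
    + (if a = j then (if 0 < (a:ℕ) ∧ (a:ℕ) < (k:ℕ) then -(d a k) else 0) else 0) := by
  have H1 : d j k + d k j = 0 := by rw [hd j k]; ring
  have H2 : d a j + d j a = 0 := by rw [hd a j]; ring
  have H3 : d a k + d k a = 0 := by rw [hd a k]; ring
  by_cases h : 0 < (j:ℕ) ∧ j < k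
  · rw [if_pos h]
    have h2 : (j:ℕ) < (k:ℕ) := by have := h.2; rwa [Fin.lt_def] at this
    rw [tc_eval hn j k a b (by omega) (by omega) (by omega)]
    split_ifs <;>
      first
        | (exfalso; tauto)
        | (simp_all <;> first | linarith | omega)
        | (simp_all [Fin.ext_iff] <;> first | linarith | omega)
        | (exfalso; simp_all [Fin.ext_iff] <;> first | linarith | omega)
  · rw [if_neg h]
    have h2 : ¬((j:ℕ) < (k:ℕ)) ∨ (j:ℕ) = 0 := by
      rw [Fin.lt_def] at h; omega
    have e1 : (if a = k then (if 0 < (j:ℕ) ∧ (j:ℕ) < (a:ℕ) then -(d a j) else 0) else 0) = 0 := by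
      by_cases hak : a = k
      · have hv : (a:ℕ) = (k:ℕ) := by rw [hak]
        rw [if_pos hak, if_neg (by omega)]
      · rw [if_neg hak]
    have e2 : (if a = j then (if 0 < (a:ℕ) ∧ (a:ℕ) < (k:ℕ) then -(d a k) else 0) else 0) = 0 := by
      by_cases haj : a = j
      · have hv : (a:ℕ) = (j:ℕ) := by rw [haj]
        rw [if_pos haj, if_neg (by omega)]
      · rw [if_neg haj]
    rw [e1, e2]; ring

set_option maxHeartbeats 2000000 in
theorem keyD {n : ℕ} (hn : 3 ≤ n) (d : Fin n → Fin n → ℝ) (hd : IsAsymGraph d)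
    (a b j k : Fin n) (ha : ¬(a:ℕ) = 0) (hb : ¬(b:ℕ) = 0) :
    (if 0 < (j:ℕ) ∧ j < k then d j k * threeCycle (⟨0, by omega⟩ : Fin n) j k a b else 0)
    = (if a = j then (if b = k then (if 0 < (a:ℕ) ∧ (a:ℕ) < (b:ℕ) then d a b else 0) else 0) else 0)
    + (if b = j then (if a = k then (if 0 < (b:ℕ) ∧ (b:ℕ) < (a:ℕ) then d a b else 0) else 0) else 0) := by
  have H1 : d j k + d k j = 0 := by rw [hd j k]; ring
  have H2 : d a b + d b a = 0 := by rw [hd a b]; ring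
  by_cases h : 0 < (j:ℕ) ∧ j < k
  · rw [if_pos h]
    have h2 : (j:ℕ) < (k:ℕ) := by have := h.2; rwa [Fin.lt_def] at this
    rw [tc_eval hn j k a b (by omega) (by omega) (by omega)]
    split_ifs <;>
      first
        | (exfalso; tauto)
        | (simp_all <;> first | linarith | omega)
        | (simp_all [Fin.ext_iff] <;> first | linarith | omega)
        | (exfalso; simp_all [Fin.ext_iff] <;> first | linarith | omega)
  · rw [if_neg h]
    have h2 : ¬((j:ℕ) < (k:ℕ)) ∨ (j:ℕ) = 0 := by
      rw [Fin.lt_def] at h; omega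
    have e1 : (if a = j then (if b = k then (if 0 < (a:ℕ) ∧ (a:ℕ) < (b:ℕ) then d a b else 0) else 0) else 0) = 0 := by
      by_cases haj : a = j
      · by_cases hbk : b = k
        · have hv1 : (a:ℕ) = (j:ℕ) := by rw [haj]
          have hv2 : (b:ℕ) = (k:ℕ) := by rw [hbk]
          rw [if_pos haj, if_pos hbk, if_neg (by omega)]
        · rw [if_pos haj, if_neg hbk]
      · rw [if_neg haj]
    have e2 : (if b = j then (if a = k then (if 0 < (b:ℕ) ∧ (b:ℕ) < (a:ℕ) then d a b else 0) else 0) else 0) = 0 := by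
      by_cases hbj : b = j
      · by_cases hak : a = k
        · have hv1 : (b:ℕ) = (j:ℕ) := by rw [hbj]
          have hv2 : (a:ℕ) = (k:ℕ) := by rw [hak]
          rw [if_pos hbj, if_pos hak, if_neg (by omega)]
        · rw [if_pos hbj, if_neg hak]
      · rw [if_neg hbj]
    rw [e1, e2]; ring

set_option maxHeartbeats 1000000 in
theorem stmt9 (n : ℕ) (hn : 3 ≤ n) (d : Fin n → Fin n → ℝ) (hd : IsAsymGraph d)
    (hzero : ∀ j : Fin n, ∑ k : Fin n, d j k = 0) :
    d = ∑ p : {p : Fin n × Fin n // 0 < (p.1 : ℕ) ∧ p.1 < p.2},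
      d p.1.1 p.1.2 • threeCycle (⟨0, by omega⟩ : Fin n) p.1.1 p.1.2 := by
  have hdiag : ∀ a : Fin n, d a a = 0 := fun a => by have := hd a a; linarith
  funext a b
  rw [Finset.sum_apply, Finset.sum_apply]
  simp only [Pi.smul_apply, smul_eq_mul]
  rw [← Finset.sum_subtype
    (Finset.univ.filter (fun p : Fin n × Fin n => 0 < (p.1 : ℕ) ∧ p.1 < p.2)) (by simp)
    (fun p => d p.1 p.2 * threeCycle ⟨0, by omega⟩ p.1 p.2 a b)]
  rw [Finset.sum_filter, Fintype.sum_prod_type]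
  dsimp only
  symm
  by_cases ha : (a:ℕ) = 0 <;> by_cases hb : (b:ℕ) = 0
  · -- a = b = 0
    have hab : a = b := Fin.ext (by omega)
    rw [Finset.sum_eq_zero, ← hab, show a = (⟨0, by omega⟩ : Fin n) from Fin.ext ha, hdiag]
    intro j _
    rw [Finset.sum_eq_zero]
    intro k _
    exact keyA hn d hd a b j k ha hb
  · -- a = 0, b ≠ 0
    calc (∑ j : Fin n, ∑ k : Fin n,
          if 0 < (j:ℕ) ∧ j < k then d j k * threeCycle (⟨0, by omega⟩ : Fin n) j k a b else 0)
        = ∑ j : Fin n, ∑ k : Fin n,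
            ((if b = j then (if 0 < (b:ℕ) ∧ (b:ℕ) < (k:ℕ) then d b k else 0) else 0)
            + (if b = k then (if 0 < (j:ℕ) ∧ (j:ℕ) < (b:ℕ) then d b j else 0) else 0)) :=
          Finset.sum_congr rfl fun j _ => Finset.sum_congr rfl fun k _ =>
            keyB hn d hd a b j k ha hb
      _ = (∑ k : Fin n, if 0 < (b:ℕ) ∧ (b:ℕ) < (k:ℕ) then d b k else 0)
          + ∑ j : Fin n, (if 0 < (j:ℕ) ∧ (j:ℕ) < (b:ℕ) then d b j else 0) := by
          simp only [Finset.sum_add_distrib]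
          congr 1
          · rw [Finset.sum_comm]
            simp [Finset.sum_ite_eq]
          · simp [Finset.sum_ite_eq]
      _ = ∑ k : Fin n, ((if 0 < (b:ℕ) ∧ (b:ℕ) < (k:ℕ) then d b k else 0)
            + (if 0 < (k:ℕ) ∧ (k:ℕ) < (b:ℕ) then d b k else 0)) := by
          rw [Finset.sum_add_distrib]
      _ = ∑ k : Fin n, (d b k - (if k = ⟨0, by omega⟩ then d b k else 0)
            - (if k = b then d b k else 0)) := by
          refine Finset.sum_congr rfl fun k _ => ?_
          by_cases hk0 : (k:ℕ) = 0
          · rw [if_pos (Fin.ext hk0 : k = ⟨0, by omega⟩),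
              if_neg (fun hkb : k = b => hb (hkb ▸ hk0)),
              if_neg (by omega), if_neg (by omega)]
            ring
          · rw [if_neg (fun hkz : k = (⟨0, by omega⟩ : Fin n) => hk0 (by rw [hkz]))]
            by_cases hkb : k = b
            · have hkb' : (k:ℕ) = (b:ℕ) := by rw [hkb]
              rw [if_pos hkb, if_neg (by omega), if_neg (by omega)]
              ring
            · have hkb' : (k:ℕ) ≠ (b:ℕ) := fun h => hkb (Fin.ext h)
              rw [if_neg hkb]
              split_ifs <;> first | ring1 | (exfalso; omega)
      _ = d a b := by
          rw [Finset.sum_sub_distrib, Finset.sum_sub_distrib, hzero b,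
            Finset.sum_ite_eq' Finset.univ (⟨0, by omega⟩ : Fin n) (fun k => d b k),
            Finset.sum_ite_eq' Finset.univ b (fun k => d b k)]
          simp only [Finset.mem_univ, if_true]
          rw [hdiag b, show a = (⟨0, by omega⟩ : Fin n) from Fin.ext ha, hd]
          ring
  · -- a ≠ 0, b = 0
    calc (∑ j : Fin n, ∑ k : Fin n,
          if 0 < (j:ℕ) ∧ j < k then d j k * threeCycle (⟨0, by omega⟩ : Fin n) j k a b else 0)
        = ∑ j : Fin n, ∑ k : Fin n,
            ((if a = k then (if 0 < (j:ℕ) ∧ (j:ℕ) < (a:ℕ) then -(d a j) else 0) else 0)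
            + (if a = j then (if 0 < (a:ℕ) ∧ (a:ℕ) < (k:ℕ) then -(d a k) else 0) else 0)) :=
          Finset.sum_congr rfl fun j _ => Finset.sum_congr rfl fun k _ =>
            keyC hn d hd a b j k ha hb
      _ = (∑ j : Fin n, if 0 < (j:ℕ) ∧ (j:ℕ) < (a:ℕ) then -(d a j) else 0)
          + ∑ k : Fin n, (if 0 < (a:ℕ) ∧ (a:ℕ) < (k:ℕ) then -(d a k) else 0) := by
          simp only [Finset.sum_add_distrib]
          congr 1
          · simp [Finset.sum_ite_eq]
          · rw [Finset.sum_comm]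
            simp [Finset.sum_ite_eq]
      _ = ∑ k : Fin n, ((if 0 < (k:ℕ) ∧ (k:ℕ) < (a:ℕ) then -(d a k) else 0)
            + (if 0 < (a:ℕ) ∧ (a:ℕ) < (k:ℕ) then -(d a k) else 0)) := by
          rw [Finset.sum_add_distrib]
      _ = ∑ k : Fin n, (-(d a k) + (if k = ⟨0, by omega⟩ then d a k else 0)
            + (if k = a then d a k else 0)) := by
          refine Finset.sum_congr rfl fun k _ => ?_
          by_cases hk0 : (k:ℕ) = 0
          · rw [if_pos (Fin.ext hk0 : k = ⟨0, by omega⟩),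
              if_neg (fun hka : k = a => ha (hka ▸ hk0)),
              if_neg (by omega), if_neg (by omega)]
            ring
          · rw [if_neg (fun hkz : k = (⟨0, by omega⟩ : Fin n) => hk0 (by rw [hkz]))]
            by_cases hka : k = a
            · have hka' : (k:ℕ) = (a:ℕ) := by rw [hka]
              rw [if_pos hka, if_neg (by omega), if_neg (by omega)]
              ring
            · have hka' : (k:ℕ) ≠ (a:ℕ) := fun h => hka (Fin.ext h)
              rw [if_neg hka]
              split_ifs <;> first | ring1 | (exfalso; omega)
      _ = d a b := by
          rw [Finset.sum_add_distrib, Finset.sum_add_distrib,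
            Finset.sum_ite_eq' Finset.univ (⟨0, by omega⟩ : Fin n) (fun k => d a k),
            Finset.sum_ite_eq' Finset.univ a (fun k => d a k)]
          simp only [Finset.mem_univ, if_true]
          have hs : ∑ k : Fin n, -(d a k) = 0 := by
            rw [Finset.sum_neg_distrib, hzero a]; ring
          rw [hs, hdiag a, show b = (⟨0, by omega⟩ : Fin n) from Fin.ext hb]
          ring
  · -- a ≠ 0, b ≠ 0
    calc (∑ j : Fin n, ∑ k : Fin n,
          if 0 < (j:ℕ) ∧ j < k then d j k * threeCycle (⟨0, by omega⟩ : Fin n) j k a b else 0)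
        = ∑ j : Fin n, ∑ k : Fin n,
            ((if a = j then (if b = k then (if 0 < (a:ℕ) ∧ (a:ℕ) < (b:ℕ) then d a b else 0) else 0) else 0)
            + (if b = j then (if a = k then (if 0 < (b:ℕ) ∧ (b:ℕ) < (a:ℕ) then d a b else 0) else 0) else 0)) :=
          Finset.sum_congr rfl fun j _ => Finset.sum_congr rfl fun k _ =>
            keyD hn d hd a b j k ha hb
      _ = (if 0 < (a:ℕ) ∧ (a:ℕ) < (b:ℕ) then d a b else 0)
          + (if 0 < (b:ℕ) ∧ (b:ℕ) < (a:ℕ) then d a b else 0) := by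
          simp only [Finset.sum_add_distrib]
          congr 1 <;> simp [Finset.sum_ite_eq]
      _ = d a b := by
          by_cases hab : (a:ℕ) = (b:ℕ)
          · have h : a = b := Fin.ext hab
            rw [h, hdiag]
            split_ifs <;> first | ring1 | (exfalso; omega)
          · split_ifs <;> first | ring1 | (exfalso; omega)
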